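/- arXiv:0708.3019 — 3 statements merged into one kernel-verified Lean document; each statement's English description precedes it below -/
import Mathlib

section
/- If G is a complex matrix satisfying G^H G = (x^T x) I for all real vectors x, where G = [A_1 x, A_2 x, ..., A_N x] with fixed complex matrices A_j, then Re(A_j^H A_j) = I for all j, and A_j^H A_i = -(A_j^H A_i)^T for all i ≠ j. -/
open Matrix

def matRe {T K : ℕ} (A : Matrix (Fin T) (Fin K) ℂ) : Matrix (Fin T) (Fin K) ℝ :=
  A.map Complex.re

/-- If `G(x) = [A₁x, …, A_N x]` satisfies `Gᴴ G = (xᵀx) I` for all real `x`,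
then `Re(A_jᴴ A_j) = I` for all `j` and `A_jᴴ A_i` is skew-symmetric for `i ≠ j`. -/
theorem stmt0 {T K N : ℕ} (A : Fin N → Matrix (Fin T) (Fin K) ℂ)
    (h : ∀ x : Fin K → ℝ,
      (Matrix.of fun (t : Fin T) (n : Fin N) =>
        (A n).mulVec (fun k => (x k : ℂ)) t)ᴴ *
      (Matrix.of fun (t : Fin T) (n : Fin N) =>
        (A n).mulVec (fun k => (x k : ℂ)) t) =
      ((∑ k, x k ^ 2 : ℝ) : ℂ) • (1 : Matrix (Fin N) (Fin N) ℂ)) :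
    (∀ j, matRe ((A j)ᴴ * A j) = (1 : Matrix (Fin K) (Fin K) ℝ)) ∧
    (∀ i j : Fin N, i ≠ j → (A j)ᴴ * A i = -((A j)ᴴ * A i)ᵀ) := by
  have key : ∀ m n : Fin N, ∀ x : Fin K → ℝ,
      ∑ k, ∑ l, ((x k : ℂ) * x l) * ((A m)ᴴ * A n) k l
        = ((∑ k, x k ^ 2 : ℝ) : ℂ) * (if m = n then 1 else 0) := by
    intro m n x
    have hx := congrFun (congrFun (h x) m) n
    simp only [Matrix.mul_apply, Matrix.conjTranspose_apply, Matrix.of_apply,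
      Matrix.mulVec, dotProduct, Matrix.smul_apply, Matrix.one_apply, smul_eq_mul,
      star_sum, star_mul', Complex.star_def, Complex.conj_ofReal] at hx
    rw [← hx]
    have swap : ∀ f : Fin T → Fin K → Fin K → ℂ,
        ∑ t, ∑ k, ∑ l, f t k l = ∑ k, ∑ l, ∑ t, f t k l := by
      intro f
      rw [Finset.sum_comm]
      exact Finset.sum_congr rfl fun k _ => Finset.sum_comm
    have expand1 : ∀ t, (∑ p, (starRingEnd ℂ) (A m t p) * (x p : ℂ)) * ∑ q, A n t q * (x q : ℂ)
        = ∑ p, ∑ q, ((starRingEnd ℂ) (A m t p) * (x p : ℂ)) * (A n t q * (x q : ℂ)) :=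
      fun t => Finset.sum_mul_sum _ _ _ _
    simp only [expand1]
    rw [swap]
    refine Finset.sum_congr rfl fun p _ => Finset.sum_congr rfl fun q _ => ?_
    simp only [Matrix.mul_apply, Matrix.conjTranspose_apply, Finset.mul_sum]
    refine Finset.sum_congr rfl fun t _ => ?_
    rw [Complex.star_def]
    ring
  have diag : ∀ m n : Fin N, ∀ k : Fin K,
      ((A m)ᴴ * A n) k k = (if m = n then 1 else 0) := by
    intro m n k
    have := key m n (Pi.single k 1)
    simp [Pi.single_apply, Finset.sum_ite_eq', apply_ite, ite_pow] at this
    split_ifs at this ⊢ <;> simp_all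
  have offd : ∀ m n : Fin N, ∀ k l : Fin K, k ≠ l →
      ((A m)ᴴ * A n) k l + ((A m)ᴴ * A n) l k = 0 := by
    intro m n k l hkl
    have h1 := key m n (Pi.single k 1 + Pi.single l 1)
    have h2 := key m n (Pi.single k 1)
    have h3 := key m n (Pi.single l 1)
    simp only [Pi.add_apply] at h1
    have expand : ∀ a b : Fin K → ℝ,
        (∑ p, ∑ q, (((a p + b p : ℝ) : ℂ) * ((a q + b q : ℝ))) * ((A m)ᴴ * A n) p q)
        = (∑ p, ∑ q, ((a p : ℂ) * a q) * ((A m)ᴴ * A n) p q)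
          + (∑ p, ∑ q, ((b p : ℂ) * b q) * ((A m)ᴴ * A n) p q)
          + (∑ p, ∑ q, ((a p : ℂ) * b q) * ((A m)ᴴ * A n) p q)
          + (∑ p, ∑ q, ((b p : ℂ) * a q) * ((A m)ᴴ * A n) p q) := by
      intro a b
      rw [← Finset.sum_add_distrib, ← Finset.sum_add_distrib, ← Finset.sum_add_distrib]
      refine Finset.sum_congr rfl fun p _ => ?_
      rw [← Finset.sum_add_distrib, ← Finset.sum_add_distrib, ← Finset.sum_add_distrib]
      refine Finset.sum_congr rfl fun q _ => ?_
      push_cast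
      ring
    rw [expand] at h1
    have hcross1 : (∑ p, ∑ q, (((Pi.single k 1 : Fin K → ℝ) p : ℂ) * ((Pi.single l 1 : Fin K → ℝ) q)) * ((A m)ᴴ * A n) p q)
        = ((A m)ᴴ * A n) k l := by
      simp [Pi.single_apply, Finset.sum_ite_eq', apply_ite]
    have hcross2 : (∑ p, ∑ q, (((Pi.single l 1 : Fin K → ℝ) p : ℂ) * ((Pi.single k 1 : Fin K → ℝ) q)) * ((A m)ᴴ * A n) p q)
        = ((A m)ᴴ * A n) l k := by
      simp [Pi.single_apply, Finset.sum_ite_eq', apply_ite]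
    rw [h2, h3, hcross1, hcross2] at h1
    have hsum : (∑ p, ((Pi.single k 1 : Fin K → ℝ) p + (Pi.single l 1 : Fin K → ℝ) p) ^ 2 : ℝ)
        = (∑ p, ((Pi.single k 1 : Fin K → ℝ) p) ^ 2)
          + (∑ p, ((Pi.single l 1 : Fin K → ℝ) p) ^ 2) := by
      rw [← Finset.sum_add_distrib]
      refine Finset.sum_congr rfl fun p _ => ?_
      rcases eq_or_ne p k with rfl | hpk
      · simp [Pi.single_apply, hkl.symm]
      · rcases eq_or_ne p l with rfl | hpl
        · simp [Pi.single_apply, hpk]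
        · simp [Pi.single_apply, hpk, hpl]
    rw [hsum] at h1
    push_cast at h1
    linear_combination h1
  constructor
  · intro j
    ext k l
    rcases eq_or_ne k l with rfl | hkl
    · have := diag j j k
      simp only [if_pos rfl] at this
      simp [matRe, this]
    · have hh : ((A j)ᴴ * A j)ᴴ = (A j)ᴴ * A j := by
        rw [Matrix.conjTranspose_mul, Matrix.conjTranspose_conjTranspose]
      have h1 := offd j j k l hkl
      have h2 : ((A j)ᴴ * A j) k l = star (((A j)ᴴ * A j) l k) := by
        conv_lhs => rw [← hh, Matrix.conjTranspose_apply]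
      have e1 := congrArg Complex.re h1
      have e2 := congrArg Complex.re h2
      simp only [Complex.add_re, Complex.zero_re] at e1
      rw [show star (((A j)ᴴ * A j) l k) = (starRingEnd ℂ) (((A j)ᴴ * A j) l k) from rfl,
        Complex.conj_re] at e2
      have : (((A j)ᴴ * A j) k l).re = 0 := by linarith
      simp [matRe, Matrix.one_apply, hkl, this]
  · intro i j hij
    ext k l
    have hne : j ≠ i := hij.symm
    rcases eq_or_ne k l with rfl | hkl
    · have := diag j i k
      rw [if_neg hne] at this
      simp only [Matrix.neg_apply, Matrix.transpose_apply, this, neg_zero]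
    · have := offd j i k l hkl
      simp only [Matrix.neg_apply, Matrix.transpose_apply]
      linear_combination this
end

section
/- Suppose each A_j satisfies A_{jI} A_{jI}^T = α I, A_{jQ} A_{jQ}^T = α I, A_{jI} A_{jQ}^T = 0, and A_{jQ} A_{jI}^T = 0 for some scalar α > 0, and the SSD conditions hold. Then the PCRC conditions hold: the first PCRC expression for any triple (j1,j2,j3) equals 2α times a 2×2 block-diagonal matrix, and the second PCRC expression equals the zero matrix. -/
open Matrix

def BlockDiag2 {n : ℕ} (D : Matrix (Fin n) (Fin n) ℝ) : Prop :=
  ∀ i j : Fin n, (i : ℕ) / 2 ≠ (j : ℕ) / 2 → D i j = 0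

def matIm {T K : ℕ} (A : Matrix (Fin T) (Fin K) ℂ) : Matrix (Fin T) (Fin K) ℝ :=
  A.map Complex.im

def SSD {T K N : ℕ} (A : Fin N → Matrix (Fin T) (Fin K) ℂ) : Prop :=
  (∀ j, BlockDiag2 ((matRe (A j))ᵀ * matRe (A j) + (matIm (A j))ᵀ * matIm (A j))) ∧
  (∀ i j : Fin N, i ≠ j →
     BlockDiag2 ((matRe (A j))ᵀ * matRe (A i) + (matIm (A j))ᵀ * matIm (A i)
       + (matRe (A i))ᵀ * matRe (A j) + (matIm (A i))ᵀ * matIm (A j))) ∧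
  (∀ i j : Fin N, i ≠ j →
     BlockDiag2 ((matRe (A j))ᵀ * matIm (A i) + (matIm (A j))ᵀ * matRe (A i)
       - (matRe (A i))ᵀ * matIm (A j) - (matIm (A i))ᵀ * matRe (A j)))

/-- if each relay matrix satisfies `A_I A_Iᵀ = αI`, `A_Q A_Qᵀ = αI`,
`A_I A_Qᵀ = 0`, `A_Q A_Iᵀ = 0` with `α > 0` and the SSD conditions hold, then for every
triple the first PCRC expression is `2α` times a 2×2 block-diagonal matrix and the second
PCRC expression vanishes. -/
theorem stmt7 {T K N : ℕ} (A : Fin N → Matrix (Fin T) (Fin K) ℂ) (α : ℝ) (hα : 0 < α)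
    (h1 : ∀ j, matRe (A j) * (matRe (A j))ᵀ = α • (1 : Matrix (Fin T) (Fin T) ℝ))
    (h2 : ∀ j, matIm (A j) * (matIm (A j))ᵀ = α • (1 : Matrix (Fin T) (Fin T) ℝ))
    (h3 : ∀ j, matRe (A j) * (matIm (A j))ᵀ = 0)
    (h4 : ∀ j, matIm (A j) * (matRe (A j))ᵀ = 0)
    (hSSD : SSD A) :
    ∀ j1 j2 j3 : Fin N,
      (∃ D : Matrix (Fin K) (Fin K) ℝ, BlockDiag2 D ∧
        (matRe (A j1))ᵀ *
            (matRe (A j2) * (matRe (A j2))ᵀ + matIm (A j2) * (matIm (A j2))ᵀ) * matRe (A j3)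
          + (matRe (A j3))ᵀ *
            (matRe (A j2) * (matRe (A j2))ᵀ + matIm (A j2) * (matIm (A j2))ᵀ) * matRe (A j1)
          + (matIm (A j1))ᵀ *
            (matRe (A j2) * (matRe (A j2))ᵀ + matIm (A j2) * (matIm (A j2))ᵀ) * matIm (A j3)
          + (matIm (A j3))ᵀ *
            (matRe (A j2) * (matRe (A j2))ᵀ + matIm (A j2) * (matIm (A j2))ᵀ) * matIm (A j1)
          = (2 * α) • D) ∧
      ((matRe (A j1))ᵀ *
          (matRe (A j2) * (matIm (A j2))ᵀ + matIm (A j2) * (matRe (A j2))ᵀ) * matIm (A j3)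
        + (matIm (A j3))ᵀ *
          (matRe (A j2) * (matIm (A j2))ᵀ + matIm (A j2) * (matRe (A j2))ᵀ) * matRe (A j1)
        + (matIm (A j1))ᵀ *
          (matRe (A j2) * (matIm (A j2))ᵀ + matIm (A j2) * (matRe (A j2))ᵀ) * matRe (A j3)
        + (matRe (A j3))ᵀ *
          (matRe (A j2) * (matIm (A j2))ᵀ + matIm (A j2) * (matRe (A j2))ᵀ) * matIm (A j1)
        = 0) := by
  intro j1 j2 j3
  constructor
  · refine ⟨(matRe (A j1))ᵀ * matRe (A j3) + (matIm (A j1))ᵀ * matIm (A j3)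
      + (matRe (A j3))ᵀ * matRe (A j1) + (matIm (A j3))ᵀ * matIm (A j1), ?_, ?_⟩
    · by_cases h : j3 = j1
      · subst h
        intro i j hij
        have := hSSD.1 j3 i j hij
        simp only [Matrix.add_apply] at this ⊢
        linarith
      · exact hSSD.2.1 j3 j1 h
    · rw [h1, h2]
      have : (α • (1 : Matrix (Fin T) (Fin T) ℝ)) + α • 1 = (2*α) • 1 := by
        rw [← add_smul]; ring_nf
      rw [this]
      simp only [Matrix.mul_smul, Matrix.smul_mul, Matrix.mul_one, ← smul_add]
      ring_nf
      simp [Matrix.mul_assoc]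
      abel
  · rw [h3, h4, add_zero]
    simp [Matrix.mul_assoc]
end

section
/- If G(x_1,...,x_K) is a square complex orthogonal design of size N, then the recursively constructed matrix G' = [[G, −x_{K+1}^* I_N],[x_{K+1} I_N, G^H]] is a square complex orthogonal design of size 2N in the K+1 variables x_1,...,x_{K+1}; that is, G'^H G' = (|x_1|² + ... + |x_{K+1}|²) I_{2N}. -/
open Matrix

open scoped ComplexOrder in
private lemma aux_comm {N : ℕ} (A : Matrix (Fin N) (Fin N) ℂ) (c : ℝ)
    (h : Aᴴ * A = (c : ℂ) • 1) : A * Aᴴ = (c : ℂ) • 1 := by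
  by_cases hc : (c : ℂ) = 0
  · have hA : A = 0 := by
      rw [← Matrix.conjTranspose_mul_self_eq_zero, h, hc, zero_smul]
    simp [hA, hc]
  · have h1 : ((c : ℂ)⁻¹ • Aᴴ) * A = 1 := by
      rw [Matrix.smul_mul, h, smul_smul, inv_mul_cancel₀ hc, one_smul]
    have h2 : A * ((c : ℂ)⁻¹ • Aᴴ) = 1 := mul_eq_one_comm.mp h1
    calc A * Aᴴ = (c : ℂ) • (A * ((c : ℂ)⁻¹ • Aᴴ)) := by
          rw [Matrix.mul_smul, smul_smul, mul_inv_cancel₀ hc, one_smul]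
      _ = (c : ℂ) • 1 := by rw [h2]

/-- the recursive SCOD construction
`G' = [[G, -x⁎ I],[x I, Gᴴ]]` yields again a square complex orthogonal design. -/
theorem stmt13 {N K : ℕ} (G : (Fin K → ℂ) → Matrix (Fin N) (Fin N) ℂ)
    (hG : ∀ v : Fin K → ℂ,
      (G v)ᴴ * G v = ((∑ k, Complex.normSq (v k) : ℝ) : ℂ) • 1) :
    ∀ x : Fin (K + 1) → ℂ,
      (Matrix.fromBlocks (G (fun k => x k.castSucc))
          (-(starRingEnd ℂ (x (Fin.last K))) • (1 : Matrix (Fin N) (Fin N) ℂ))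
          ((x (Fin.last K)) • (1 : Matrix (Fin N) (Fin N) ℂ))
          ((G (fun k => x k.castSucc))ᴴ))ᴴ *
      (Matrix.fromBlocks (G (fun k => x k.castSucc))
          (-(starRingEnd ℂ (x (Fin.last K))) • (1 : Matrix (Fin N) (Fin N) ℂ))
          ((x (Fin.last K)) • (1 : Matrix (Fin N) (Fin N) ℂ))
          ((G (fun k => x k.castSucc))ᴴ)) =
      ((∑ k, Complex.normSq (x k) : ℝ) : ℂ) • 1 := by
  intro x
  set A := G (fun k => x k.castSucc) with hA
  set c := x (Fin.last K) with hc
  have h1 : Aᴴ * A = ((∑ k : Fin K, Complex.normSq (x k.castSucc) : ℝ) : ℂ) • 1 := hG _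
  have h2 : A * Aᴴ = ((∑ k : Fin K, Complex.normSq (x k.castSucc) : ℝ) : ℂ) • 1 :=
    aux_comm A _ h1
  have hcc : (starRingEnd ℂ c) * c = ((Complex.normSq c : ℝ) : ℂ) := by
    rw [mul_comm, Complex.mul_conj]
  have hsum : ((∑ k, Complex.normSq (x k) : ℝ) : ℂ)
      = ((∑ k : Fin K, Complex.normSq (x k.castSucc) : ℝ) : ℂ) + (starRingEnd ℂ c) * c := by
    rw [Fin.sum_univ_castSucc, Complex.ofReal_add, hcc]
  have hcc' : c * (starRingEnd ℂ) c = ((Complex.normSq c : ℝ) : ℂ) := by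
    rw [Complex.mul_conj]
  have hs : ((∑ k : Fin (K + 1), Complex.normSq (x k) : ℝ) : ℂ)
      = ((∑ k : Fin K, Complex.normSq (x k.castSucc) : ℝ) : ℂ)
        + ((Complex.normSq c : ℝ) : ℂ) := by
    rw [hsum, hcc]
  have hTL : Aᴴ * A + (c • (1 : Matrix (Fin N) (Fin N) ℂ))ᴴ * (c • 1)
      = ((∑ k : Fin (K + 1), Complex.normSq (x k) : ℝ) : ℂ) • 1 := by
    rw [hs, add_smul, h1]
    simp [smul_smul, Matrix.smul_mul, Matrix.mul_smul, ← hcc, mul_comm]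
  have hTR : Aᴴ * (-(starRingEnd ℂ) c • (1 : Matrix (Fin N) (Fin N) ℂ))
      + (c • (1 : Matrix (Fin N) (Fin N) ℂ))ᴴ * Aᴴ = 0 := by
    simp [Matrix.mul_smul, Matrix.smul_mul]
  have hBL : (-(starRingEnd ℂ) c • (1 : Matrix (Fin N) (Fin N) ℂ))ᴴ * A
      + Aᴴᴴ * (c • (1 : Matrix (Fin N) (Fin N) ℂ)) = 0 := by
    simp [Matrix.mul_smul, Matrix.smul_mul]
  have hBR : (-(starRingEnd ℂ) c • (1 : Matrix (Fin N) (Fin N) ℂ))ᴴ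
        * (-(starRingEnd ℂ) c • (1 : Matrix (Fin N) (Fin N) ℂ)) + Aᴴᴴ * Aᴴ
      = ((∑ k : Fin (K + 1), Complex.normSq (x k) : ℝ) : ℂ) • 1 := by
    rw [hs, add_smul]
    simp [Matrix.conjTranspose_conjTranspose, h2, smul_smul, Matrix.smul_mul,
      Matrix.mul_smul, ← hcc', add_comm, mul_comm]
  rw [Matrix.fromBlocks_conjTranspose, Matrix.fromBlocks_multiply, hTL, hTR, hBL, hBR,
    ← Matrix.fromBlocks_one (l := Fin N) (m := Fin N) (α := ℂ), Matrix.fromBlocks_smul]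
  simp
end
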